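/- Let (X_n)_{n∈ℕ} be a stationary and ergodic process with values in a Euclidean space E, let Θ be a compact subset of some Euclidean space, and let F : E × Θ → ℝ be measurable such that θ ↦ F(x,θ) is continuous for every x ∈ E. Define φ(x) = sup_{θ∈Θ} |F(x,θ)| and assume E[φ(X_0)] < ∞. Then (1/N) Σ_{n=1}^N F(X_n, θ) → E[F(X_0, θ)] almost surely, uniformly in θ ∈ Θ; that is, almost surely sup_{θ∈Θ} |(1/N) Σ_{n=1}^N F(X_n,θ) − E[F(X_0,θ)]| → 0 as N → ∞. -/

import Mathlib

/-!
Birkhoff's pointwise ergodic theorem comes from Garsia's maximal inequality: if `∫ g < 0`, the set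
where some Birkhoff sum of `g` is positive carries a nonnegative integral of `g`, so its complement
is not null. By ergodicity almost every orbit enters that complement, after which the Birkhoff sums
never exceed their value at the entrance time; hence they are bounded above, and the averages of
`g - b` for every `b > ∫ g` are eventually negative.

For the uniform statement, continuity in `θ` and dominated convergence give, around each `θ₀`, a
ball on which the oscillation `sup |F(·, θ) - F(·, θ₀)|` has small integral. Birkhoff's theorem
for `F(·, θ₀)` and for this oscillation controls the averages on the whole ball, and compactness of
`Θ` leaves finitely many balls. Since `X n = X 0 ∘ T^[n]`, the averages along the process are
Birkhoff averages of `T`.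
-/

open MeasureTheory Filter Topology

theorem MeasureTheory.MeasurePreserving.integral_comp_of_aestronglyMeasurable
    {α β E : Type*} [MeasurableSpace α] [MeasurableSpace β] [NormedAddCommGroup E]
    [NormedSpace ℝ E] {μ : Measure α} {ν : Measure β} {f : α → β} {h : β → E}
    (hf : MeasurePreserving f μ ν) (hh : AEStronglyMeasurable h ν) :
    ∫ x, h (f x) ∂μ = ∫ y, h y ∂ν := by
  rw [← integral_map hf.measurable.aemeasurable (by rwa [hf.map_eq]), hf.map_eq]

section Maximal

open Finset

def birkhoffMax {α : Type*} (f : α → α) (g : α → ℝ) (n : ℕ) : α → ℝ :=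
  (range (n + 1)).sup' nonempty_range_add_one (birkhoffSum f g)

variable {α : Type*} {f : α → α} {g : α → ℝ}

theorem birkhoffMax_apply (n : ℕ) (x : α) :
    birkhoffMax f g n x = (range (n + 1)).sup' nonempty_range_add_one (birkhoffSum f g · x) :=
  Finset.sup'_apply _ _ _

theorem birkhoffSum_le_birkhoffMax {k n : ℕ} (hk : k ≤ n) (x : α) :
    birkhoffSum f g k x ≤ birkhoffMax f g n x := by
  rw [birkhoffMax_apply]
  exact le_sup' (birkhoffSum f g · x) (mem_range_succ_iff.2 hk)

theorem birkhoffMax_nonneg (n : ℕ) (x : α) : 0 ≤ birkhoffMax f g n x := by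
  simpa using birkhoffSum_le_birkhoffMax (f := f) (g := g) n.zero_le x

theorem birkhoffMax_mono {m n : ℕ} (h : m ≤ n) (x : α) :
    birkhoffMax f g m x ≤ birkhoffMax f g n x := by
  rw [birkhoffMax_apply, sup'_le_iff]
  exact fun k hk => birkhoffSum_le_birkhoffMax ((mem_range_succ_iff.1 hk).trans h) x

theorem birkhoffMax_le_max (n : ℕ) (x : α) :
    birkhoffMax f g n x ≤ max 0 (g x + birkhoffMax f g n (f x)) := by
  rw [birkhoffMax_apply, sup'_le_iff]
  rintro (_ | k) hk
  · simp
  · rw [birkhoffSum_succ']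
    have := birkhoffSum_le_birkhoffMax (f := f) (g := g) (k := k) (n := n)
      (by rw [mem_range] at hk; omega) (f x)
    exact le_max_of_le_right (by linarith)

variable [MeasurableSpace α] {μ : Measure α}

theorem measurable_birkhoffSum (hf : Measurable f) (hg : Measurable g) (n : ℕ) :
    Measurable (birkhoffSum f g n) :=
  measurable_sum _ fun i _ => hg.comp (hf.iterate i)

theorem measurable_birkhoffMax (hf : Measurable f) (hg : Measurable g) (n : ℕ) :
    Measurable (birkhoffMax f g n) :=
  measurable_range_sup' fun k _ => measurable_birkhoffSum hf hg k

theorem integrable_birkhoffMax (hf : MeasurePreserving f μ μ) (hg : Integrable g μ) (n : ℕ) :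
    Integrable (birkhoffMax f g n) μ :=
  sup'_induction (p := (Integrable · μ)) _ _ (fun _ h₁ _ h₂ => h₁.sup h₂) fun _ _ =>
    integrable_finsetSum _ fun i _ => (hf.iterate i).integrable_comp_of_integrable hg

/-- Garsia's form of the maximal ergodic theorem. -/
theorem setIntegral_nonneg_of_birkhoffMax_pos (hf : MeasurePreserving f μ μ)
    (hgm : Measurable g) (hg : Integrable g μ) (n : ℕ) :
    0 ≤ ∫ x in {x | 0 < birkhoffMax f g n x}, g x ∂μ := by
  set M := birkhoffMax f g n
  set A := {x | 0 < M x}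
  have hA : MeasurableSet A :=
    measurableSet_lt measurable_const (measurable_birkhoffMax hf.measurable hgm n)
  have hM : Integrable M μ := integrable_birkhoffMax hf hg n
  have hMf : Integrable (fun x => M (f x)) μ := hf.integrable_comp_of_integrable hM
  have hMA : ∫ x in A, M x ∂μ = ∫ x, M x ∂μ :=
    setIntegral_eq_integral_of_forall_compl_eq_zero fun x hx =>
      le_antisymm (not_lt.1 hx) (birkhoffMax_nonneg n x)
  have hMfA : ∫ x in A, M (f x) ∂μ ≤ ∫ x, M x ∂μ :=
    (setIntegral_le_integral hMf (.of_forall fun x => birkhoffMax_nonneg n (f x))).trans_eq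
      (hf.integral_comp_of_aestronglyMeasurable hM.1)
  -- On `A` the maximum is positive, so `birkhoffMax_le_max` reads `M ≤ g + M ∘ f`.
  have hdiff : ∫ x in A, (M x - M (f x)) ∂μ ≤ ∫ x in A, g x ∂μ :=
    setIntegral_mono_on (hM.sub hMf).integrableOn hg.integrableOn hA fun x hx => by
      have := (le_max_iff.1 (birkhoffMax_le_max n x)).resolve_left (not_le.2 hx)
      linarith
  rw [integral_sub hM.integrableOn hMf.integrableOn, hMA] at hdiff
  linarith

theorem setIntegral_nonneg_of_exists_birkhoffSum_pos (hf : MeasurePreserving f μ μ)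
    (hgm : Measurable g) (hg : Integrable g μ) :
    0 ≤ ∫ x in {x | ∃ n, 0 < birkhoffSum f g n x}, g x ∂μ := by
  have hunion : {x | ∃ n, 0 < birkhoffSum f g n x} = ⋃ n, {x | 0 < birkhoffMax f g n x} := by
    ext x
    simp only [Set.mem_ofPred_eq, Set.mem_iUnion]
    refine ⟨fun ⟨n, hn⟩ => ⟨n, hn.trans_le (birkhoffSum_le_birkhoffMax le_rfl x)⟩,
      fun ⟨n, hn⟩ => ?_⟩
    obtain ⟨k, -, hk⟩ := exists_mem_eq_sup' nonempty_range_add_one (birkhoffSum f g · x)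
    exact ⟨k, by rwa [birkhoffMax_apply, hk] at hn⟩
  rw [hunion]
  refine ge_of_tendsto' (tendsto_setIntegral_of_monotone (fun n => ?_) (fun m n h x hx => ?_)
    hg.integrableOn) (setIntegral_nonneg_of_birkhoffMax_pos hf hgm hg)
  · exact measurableSet_lt measurable_const (measurable_birkhoffMax hf.measurable hgm n)
  · exact lt_of_lt_of_le hx (birkhoffMax_mono h x)

end Maximal

section Birkhoff

variable {α : Type*} {f : α → α} {g : α → ℝ}

theorem bddAbove_birkhoffSum_of_iterate {x : α} {m : ℕ}
    (h : ∀ n, birkhoffSum f g n (f^[m] x) ≤ 0) : BddAbove (Set.range (birkhoffSum f g · x)) := by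
  refine ⟨birkhoffMax f g m x, Set.forall_mem_range.2 fun n => ?_⟩
  rcases le_or_gt n m with hn | hn
  · exact birkhoffSum_le_birkhoffMax hn x
  · obtain ⟨k, rfl⟩ := Nat.exists_eq_add_of_lt hn
    rw [add_assoc, birkhoffSum_add]
    linarith [h (k + 1), birkhoffSum_le_birkhoffMax (f := f) (g := g) (le_refl m) x]

variable [MeasurableSpace α] {μ : Measure α}

theorem Ergodic.ae_exists_iterate_mem [IsFiniteMeasure μ] (hf : Ergodic f μ) {s : Set α}
    (hs : MeasurableSet s) (hμs : μ s ≠ 0) : ∀ᵐ x ∂μ, ∃ m, f^[m] x ∈ s := by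
  set D := ⋃ m, f^[m] ⁻¹' s
  have hD : MeasurableSet D := .iUnion fun m => hf.measurable.iterate m hs
  have hfD : f ⁻¹' D ⊆ D := fun x hx => by
    obtain ⟨m, hm⟩ := Set.mem_iUnion.1 hx
    exact Set.mem_iUnion.2 ⟨m + 1, by rwa [Set.mem_preimage, Function.iterate_succ_apply]⟩
  rcases hf.ae_empty_or_univ_of_preimage_ae_le hD.nullMeasurableSet hfD.eventuallyLE with h | h
  · have hsD : s ⊆ D := Set.subset_iUnion_of_subset 0 le_rfl
    exact absurd (measure_mono_null hsD (by simpa using measure_congr h)) hμs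
  · filter_upwards [mem_ae_iff.2 (ae_eq_univ.1 h)] with x hx using Set.mem_iUnion.1 hx

theorem Ergodic.ae_bddAbove_birkhoffSum [IsFiniteMeasure μ] (hf : Ergodic f μ)
    (hgm : Measurable g) (hg : Integrable g μ) (hneg : ∫ x, g x ∂μ < 0) :
    ∀ᵐ x ∂μ, BddAbove (Set.range (birkhoffSum f g · x)) := by
  set s := {x | ∀ n, birkhoffSum f g n x ≤ 0}
  have hs : MeasurableSet s := by
    simp only [s, Set.ofPred_forall]
    exact .iInter fun n =>
      measurableSet_le (measurable_birkhoffSum hf.measurable hgm n) measurable_const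
  -- By the maximal ergodic theorem `g` has nonnegative integral off `s`, so `s` is not null.
  have hμs : μ s ≠ 0 := fun h0 => by
    have hsc : {x | ∃ n, 0 < birkhoffSum f g n x} = sᶜ := by ext; simp [s]
    have := setIntegral_nonneg_of_exists_birkhoffSum_pos hf.toMeasurePreserving hgm hg
    rw [hsc, setIntegral_eq_integral_of_ae_compl_eq_zero] at this
    · linarith
    · filter_upwards [measure_eq_zero_iff_ae_notMem.1 h0] with x hx hx'
      exact absurd (not_not.1 hx') hx
  filter_upwards [hf.ae_exists_iterate_mem hs hμs] with x ⟨m, hm⟩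
  exact bddAbove_birkhoffSum_of_iterate hm

theorem Ergodic.ae_eventually_birkhoffAverage_lt [IsProbabilityMeasure μ] (hf : Ergodic f μ)
    (hgm : Measurable g) (hg : Integrable g μ) {a : ℝ} (ha : ∫ x, g x ∂μ < a) :
    ∀ᵐ x ∂μ, ∀ᶠ n in atTop, birkhoffAverage ℝ f g n x < a := by
  obtain ⟨b, hgb, hba⟩ := exists_between ha
  have hneg : ∫ x, (g x - b) ∂μ < 0 := by
    rw [integral_sub hg (integrable_const b), integral_const, probReal_univ, one_smul]
    linarith
  filter_upwards [hf.ae_bddAbove_birkhoffSum (hgm.sub measurable_const)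
    (hg.sub (integrable_const b)) hneg] with x ⟨C, hC⟩
  have hlarge : ∀ᶠ n : ℕ in atTop, C < n * (a - b) :=
    (tendsto_natCast_atTop_atTop.atTop_mul_const (sub_pos.2 hba)).eventually_gt_atTop C
  filter_upwards [hlarge, eventually_gt_atTop 0] with n hn hn0
  have hsum : birkhoffSum f (g - fun _ => b) n x = birkhoffSum f g n x - n * b := by
    simp [birkhoffSum, Finset.sum_sub_distrib]
  have := hC (Set.mem_range_self n)
  rw [hsum] at this
  rw [birkhoffAverage, smul_eq_mul, inv_mul_lt_iff₀ (by exact_mod_cast hn0)]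
  linarith

theorem ae_tendsto_of_forall_ae_eventually {ι : Type*} {l : Filter ι} {u : ι → α → ℝ} {c : ℝ}
    (hup : ∀ a, c < a → ∀ᵐ x ∂μ, ∀ᶠ n in l, u n x < a)
    (hlo : ∀ a < c, ∀ᵐ x ∂μ, ∀ᶠ n in l, a < u n x) :
    ∀ᵐ x ∂μ, Tendsto (u · x) l (𝓝 c) := by
  filter_upwards [ae_all_iff.2 fun q : {q : ℚ // c < q} => hup q q.2,
    ae_all_iff.2 fun q : {q : ℚ // (q : ℝ) < c} => hlo q q.2] with x hup hlo
  refine tendsto_order.2 ⟨fun a ha => ?_, fun a ha => ?_⟩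
  · obtain ⟨q, haq, hqc⟩ := exists_rat_btwn ha
    exact (hlo ⟨q, hqc⟩).mono fun n hn => haq.trans hn
  · obtain ⟨q, hcq, hqa⟩ := exists_rat_btwn ha
    exact (hup ⟨q, hcq⟩).mono fun n hn => hn.trans hqa

/-- Birkhoff's pointwise ergodic theorem. -/
theorem Ergodic.ae_tendsto_birkhoffAverage [IsProbabilityMeasure μ] (hf : Ergodic f μ)
    (hg : Integrable g μ) :
    ∀ᵐ x ∂μ, Tendsto (birkhoffAverage ℝ f g · x) atTop (𝓝 (∫ x, g x ∂μ)) := by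
  set g' := hg.1.mk g
  have hg'm : Measurable g' := hg.1.stronglyMeasurable_mk.measurable
  have hg' : Integrable g' μ := hg.congr hg.1.ae_eq_mk
  have hlim : ∀ᵐ x ∂μ, Tendsto (birkhoffAverage ℝ f g' · x) atTop (𝓝 (∫ x, g' x ∂μ)) := by
    refine ae_tendsto_of_forall_ae_eventually
      (fun a ha => hf.ae_eventually_birkhoffAverage_lt hg'm hg' ha) fun a ha => ?_
    have hneg : ∫ x, (-g') x ∂μ < -a := by simp only [Pi.neg_apply, integral_neg]; linarith
    filter_upwards [hf.ae_eventually_birkhoffAverage_lt hg'm.neg hg'.neg hneg] with x hx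
    filter_upwards [hx] with n hn
    rw [birkhoffAverage_neg, Pi.neg_apply, Pi.neg_apply] at hn
    linarith
  have hae : ∀ᵐ x ∂μ, ∀ n, birkhoffAverage ℝ f g n x = birkhoffAverage ℝ f g' n x :=
    ae_all_iff.2 fun n => hf.quasiMeasurePreserving.birkhoffAverage_ae_eq_of_ae_eq ℝ hg.1.ae_eq_mk n
  filter_upwards [hlim, hae] with x hx hx'
  simpa only [hx', integral_congr_ae hg.1.ae_eq_mk] using hx

end Birkhoff

section BallOscillation

variable {V : Type*} [PseudoMetricSpace V] {g : V → ℝ} {Θ D : Set V} {θ₀ θ : V} {δ C : ℝ}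

/-- Taken along `D` rather than over the whole ball: for countable `D` it is a countable supremum,
hence measurable in families. -/
noncomputable def ballOscillation (g : V → ℝ) (D : Set V) (θ₀ : V) (δ : ℝ) : ℝ :=
  ⨆ p : ↥(D ∩ Metric.ball θ₀ δ), |g p - g θ₀|

theorem ballOscillation_nonneg : 0 ≤ ballOscillation g D θ₀ δ :=
  Real.iSup_nonneg fun _ => abs_nonneg _

theorem ballOscillation_le (hDΘ : D ⊆ Θ) (hθ₀ : θ₀ ∈ Θ) (hC : ∀ θ ∈ Θ, |g θ| ≤ C) :
    ballOscillation g D θ₀ δ ≤ 2 * C :=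
  Real.iSup_le (fun p => (abs_sub _ _).trans (by linarith [hC p (hDΘ p.2.1), hC θ₀ hθ₀]))
    (by linarith [abs_nonneg (g θ₀), hC θ₀ hθ₀])

theorem abs_sub_le_ballOscillation (hg : ContinuousOn g Θ) (hDΘ : D ⊆ Θ) (hΘD : Θ ⊆ closure D)
    (hC : ∀ θ ∈ Θ, |g θ| ≤ C) (hθ : θ ∈ Θ) (hθδ : dist θ θ₀ < δ) :
    |g θ - g θ₀| ≤ ballOscillation g D θ₀ δ := by
  have hbdd : BddAbove (Set.range fun p : ↥(D ∩ Metric.ball θ₀ δ) => |g p - g θ₀|) :=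
    ⟨C + |g θ₀|, Set.forall_mem_range.2 fun p =>
      (abs_sub _ _).trans (by linarith [hC p (hDΘ p.2.1)])⟩
  have hcl : θ ∈ closure (Metric.ball θ₀ δ ∩ D) := Metric.isOpen_ball.inter_closure ⟨hθδ, hΘD hθ⟩
  exact ContinuousWithinAt.closure_le hcl
    (((hg θ hθ).mono (Set.inter_subset_right.trans hDΘ)).sub continuousWithinAt_const).abs
    continuousWithinAt_const fun p hp => le_ciSup hbdd ⟨p, hp.2, hp.1⟩

theorem tendsto_ballOscillation (hg : ContinuousWithinAt g Θ θ₀) (hDΘ : D ⊆ Θ) :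
    Tendsto (ballOscillation g D θ₀) (𝓝[>] 0) (𝓝 0) := by
  rw [Metric.tendsto_nhds]
  intro ε hε
  obtain ⟨δ₀, hδ₀, hg⟩ := Metric.continuousWithinAt_iff.1 hg (ε / 2) (half_pos hε)
  filter_upwards [Ioo_mem_nhdsGT hδ₀] with δ hδ
  have hle : ballOscillation g D θ₀ δ ≤ ε / 2 := Real.iSup_le (fun p =>
    (hg (hDΘ p.2.1) ((Metric.mem_ball.1 p.2.2).trans hδ.2)).le) (by linarith)
  rw [Real.dist_eq, sub_zero, abs_of_nonneg ballOscillation_nonneg]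
  linarith

variable {Ω : Type*} [MeasurableSpace Ω] {μ : Measure Ω} {G : Ω → V → ℝ} {φ : Ω → ℝ}

theorem measurable_ballOscillation (hD : D.Countable) (hG : ∀ θ ∈ D, Measurable (G · θ))
    (hθ₀ : Measurable (G · θ₀)) : Measurable fun ω => ballOscillation (G ω) D θ₀ δ := by
  have := (hD.mono (Set.inter_subset_left (t := Metric.ball θ₀ δ))).to_subtype
  exact Measurable.iSup fun p => ((hG p p.2.1).sub hθ₀).abs

theorem exists_integral_ballOscillation_lt (hD : D.Countable) (hDΘ : D ⊆ Θ) (hθ₀ : θ₀ ∈ Θ)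
    (hGm : ∀ θ ∈ Θ, Measurable (G · θ)) (hGc : ∀ ω, ContinuousWithinAt (G ω) Θ θ₀)
    (hφ : Integrable φ μ) (hbound : ∀ ω, ∀ θ ∈ Θ, |G ω θ| ≤ φ ω) {ε : ℝ} (hε : 0 < ε) :
    ∃ δ > 0, ∫ ω, ballOscillation (G ω) D θ₀ δ ∂μ < ε := by
  have hlim : Tendsto (fun δ => ∫ ω, ballOscillation (G ω) D θ₀ δ ∂μ) (𝓝[>] 0) (𝓝 0) := by
    simpa using tendsto_integral_filter_of_dominated_convergence (fun ω => 2 * φ ω)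
      (.of_forall fun δ => (measurable_ballOscillation hD (fun θ hθ => hGm θ (hDΘ hθ))
        (hGm θ₀ hθ₀)).aestronglyMeasurable)
      (.of_forall fun δ => .of_forall fun ω => by
        rw [Real.norm_eq_abs, abs_of_nonneg ballOscillation_nonneg]
        exact ballOscillation_le hDΘ hθ₀ (hbound ω))
      (hφ.const_mul 2) (.of_forall fun ω => tendsto_ballOscillation (hGc ω) hDΘ)
  obtain ⟨δ, hδε, hδ⟩ := ((hlim.eventually (gt_mem_nhds hε)).and self_mem_nhdsWithin).exists
  exact ⟨δ, hδ, hδε⟩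

end BallOscillation

section UniformErgodic

theorem abs_birkhoffAverage_sub_le {α : Type*} {f : α → α} {g h w : α → ℝ}
    (hw : ∀ x, |g x - h x| ≤ w x) (n : ℕ) (x : α) :
    |birkhoffAverage ℝ f g n x - birkhoffAverage ℝ f h n x| ≤ birkhoffAverage ℝ f w n x := by
  simp only [birkhoffAverage, birkhoffSum, smul_eq_mul, ← mul_sub, ← Finset.sum_sub_distrib,
    abs_mul, abs_inv, Nat.abs_cast]
  gcongr
  exact (Finset.abs_sum_le_sum_abs _ _).trans (Finset.sum_le_sum fun k _ => hw _)

variable {Ω V : Type*} [MeasurableSpace Ω] [PseudoMetricSpace V] {μ : Measure Ω}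
  {T : Ω → Ω} {G : Ω → V → ℝ} {Θ D : Set V} {φ : Ω → ℝ}

theorem abs_birkhoffAverage_sub_integral_le {g h w : Ω → ℝ} (hg : Integrable g μ)
    (hh : Integrable h μ) (hwi : Integrable w μ) (hw : ∀ x, |g x - h x| ≤ w x) (n : ℕ) (x : Ω) :
    |birkhoffAverage ℝ T g n x - ∫ y, g y ∂μ| ≤
      |birkhoffAverage ℝ T h n x - ∫ y, h y ∂μ| + birkhoffAverage ℝ T w n x + ∫ y, w y ∂μ := by
  have hA := abs_birkhoffAverage_sub_le (f := T) hw n x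
  have hI : |∫ y, g y ∂μ - ∫ y, h y ∂μ| ≤ ∫ y, w y ∂μ := by
    rw [← integral_sub hg hh]
    exact abs_integral_le_integral_abs.trans (integral_mono (hg.sub hh).abs hwi hw)
  rw [abs_le] at hA hI ⊢
  constructor <;> linarith [le_abs_self (birkhoffAverage ℝ T h n x - ∫ y, h y ∂μ),
    neg_abs_le (birkhoffAverage ℝ T h n x - ∫ y, h y ∂μ)]

variable [IsProbabilityMeasure μ]

theorem Ergodic.exists_mem_nhdsWithin_ae_eventually_abs_birkhoffAverage_sub_lt
    (hT : Ergodic T μ) (hD : D.Countable) (hDΘ : D ⊆ Θ) (hΘD : Θ ⊆ closure D)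
    (hGm : ∀ θ ∈ Θ, Measurable (G · θ)) (hGc : ∀ ω, ContinuousOn (G ω) Θ)
    (hφ : Integrable φ μ) (hbound : ∀ ω, ∀ θ ∈ Θ, |G ω θ| ≤ φ ω)
    {θ₀ : V} (hθ₀ : θ₀ ∈ Θ) {a : ℝ} (ha : 0 < a) :
    ∃ U ∈ 𝓝[Θ] θ₀, ∀ᵐ ω ∂μ, ∀ᶠ N in atTop, ∀ θ ∈ U,
      |birkhoffAverage ℝ T (G · θ) N ω - ∫ x, G x θ ∂μ| < a := by
  have hGi : ∀ θ ∈ Θ, Integrable (G · θ) μ := fun θ hθ =>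
    hφ.mono' (hGm θ hθ).aestronglyMeasurable (.of_forall fun ω => hbound ω θ hθ)
  obtain ⟨δ, hδ, hwδ⟩ := exists_integral_ballOscillation_lt hD hDΘ hθ₀ hGm
    (fun ω => hGc ω θ₀ hθ₀) hφ hbound (ε := a / 4) (by positivity)
  set w := fun ω => ballOscillation (G ω) D θ₀ δ
  have hwi : Integrable w μ := (hφ.const_mul 2).mono'
    (measurable_ballOscillation hD (fun θ hθ => hGm θ (hDΘ hθ)) (hGm θ₀ hθ₀)).aestronglyMeasurable
    (.of_forall fun ω => by
      rw [Real.norm_eq_abs, abs_of_nonneg ballOscillation_nonneg]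
      exact ballOscillation_le hDΘ hθ₀ (hbound ω))
  refine ⟨Θ ∩ Metric.ball θ₀ δ, inter_mem_nhdsWithin _ (Metric.ball_mem_nhds _ hδ), ?_⟩
  filter_upwards [hT.ae_tendsto_birkhoffAverage (hGi θ₀ hθ₀), hT.ae_tendsto_birkhoffAverage hwi]
    with ω h₀ hw
  filter_upwards [Metric.tendsto_nhds.1 h₀ (a / 4) (by positivity),
    hw.eventually (gt_mem_nhds (by linarith : ∫ x, w x ∂μ < a / 2))] with N hN₀ hNw θ ⟨hθ, hθδ⟩
  have := abs_birkhoffAverage_sub_integral_le (T := T) (hGi θ hθ) (hGi θ₀ hθ₀) hwi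
    (fun ω => abs_sub_le_ballOscillation (hGc ω) hDΘ hΘD (hbound ω) hθ hθδ) N ω
  rw [Real.dist_eq] at hN₀
  linarith

theorem Ergodic.ae_eventually_abs_birkhoffAverage_sub_lt (hT : Ergodic T μ) (hΘ : IsCompact Θ)
    (hD : D.Countable) (hDΘ : D ⊆ Θ) (hΘD : Θ ⊆ closure D)
    (hGm : ∀ θ ∈ Θ, Measurable (G · θ)) (hGc : ∀ ω, ContinuousOn (G ω) Θ)
    (hφ : Integrable φ μ) (hbound : ∀ ω, ∀ θ ∈ Θ, |G ω θ| ≤ φ ω) {a : ℝ} (ha : 0 < a) :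
    ∀ᵐ ω ∂μ, ∀ᶠ N in atTop, ∀ θ ∈ Θ, |birkhoffAverage ℝ T (G · θ) N ω - ∫ x, G x θ ∂μ| < a := by
  refine hΘ.induction_on (p := fun s => ∀ᵐ ω ∂μ, ∀ᶠ N in atTop, ∀ θ ∈ s,
      |birkhoffAverage ℝ T (G · θ) N ω - ∫ x, G x θ ∂μ| < a) ?_ ?_ ?_ ?_
  · simp
  · exact fun s t hst ht => ht.mono fun ω hω => hω.mono fun N hN θ hθ => hN θ (hst hθ)
  · intro s t hs ht
    filter_upwards [hs, ht] with ω hsω htω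
    filter_upwards [hsω, htω] with N hsN htN θ hθ
    exact hθ.elim (hsN θ) (htN θ)
  · exact fun θ₀ hθ₀ => hT.exists_mem_nhdsWithin_ae_eventually_abs_birkhoffAverage_sub_lt hD hDΘ
      hΘD hGm hGc hφ hbound hθ₀ ha

theorem IsCompact.abs_le_iSup_abs {g : V → ℝ} (hΘ : IsCompact Θ) (hg : ContinuousOn g Θ)
    {θ : V} (hθ : θ ∈ Θ) : |g θ| ≤ ⨆ θ : Θ, |g θ| :=
  le_ciSup (by simpa [Set.image_eq_range] using hΘ.bddAbove_image hg.abs) (⟨θ, hθ⟩ : Θ)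

theorem Ergodic.ae_tendsto_iSup_abs_birkhoffAverage_sub_integral (hT : Ergodic T μ)
    (hΘ : IsCompact Θ) (hGm : ∀ θ ∈ Θ, Measurable (G · θ)) (hGc : ∀ ω, ContinuousOn (G ω) Θ)
    (hφ : Integrable (fun ω => ⨆ θ : Θ, |G ω θ|) μ) :
    ∀ᵐ ω ∂μ, Tendsto (fun N => ⨆ θ : Θ, |birkhoffAverage ℝ T (G · θ) N ω - ∫ x, G x θ ∂μ|)
      atTop (𝓝 0) := by
  obtain ⟨D, hDΘ, hD, hΘD⟩ := hΘ.isSeparable.exists_countable_dense_subset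
  refine ae_tendsto_of_forall_ae_eventually (fun a ha => ?_) fun a ha =>
    .of_forall fun ω => .of_forall fun N => ha.trans_le (Real.iSup_nonneg fun _ => abs_nonneg _)
  filter_upwards [hT.ae_eventually_abs_birkhoffAverage_sub_lt hΘ hD hDΘ hΘD hGm hGc hφ
    (fun ω θ hθ => hΘ.abs_le_iSup_abs (hGc ω) hθ) (half_pos ha)] with ω hω
  filter_upwards [hω] with N hN
  exact (Real.iSup_le (fun θ : Θ => (hN θ θ.2).le) (half_pos ha).le).trans_lt (half_lt_self ha)

end UniformErgodic

theorem uniform_ergodic_theorem_general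
    {Ω E V : Type*} [MeasurableSpace Ω]
    [MeasurableSpace E]
    [NormedAddCommGroup V]
    (μ : Measure Ω) [IsProbabilityMeasure μ]
    (T : Ω → Ω) (hErg : Ergodic T μ)
    (X : ℕ → Ω → E) (hX0 : Measurable (X 0))
    (hshift : ∀ n ω, X (n+1) ω = X n (T ω))
    (Θ : Set V) (hΘc : IsCompact Θ)
    (F : E → V → ℝ)
    (hFmeas : ∀ θ ∈ Θ, Measurable fun x => F x θ)
    (hFcont : ∀ x : E, ContinuousOn (F x) Θ)
    (henv : Integrable (fun ω => ⨆ θ : Θ, |F (X 0 ω) (θ : V)|) μ) :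
    ∀ᵐ ω ∂μ, Tendsto
      (fun N : ℕ => ⨆ θ : Θ,
        |(1 / (N : ℝ)) * (∑ n ∈ Finset.range N, F (X n ω) (θ : V))
          - ∫ ω', F (X 0 ω') (θ : V) ∂μ|)
      atTop (nhds 0) := by
  have hX : ∀ n ω, X n ω = X 0 (T^[n] ω) := by
    intro n
    induction n with
    | zero => exact fun _ => rfl
    | succ n ih => exact fun ω => by rw [hshift, ih, Function.iterate_succ_apply]
  have hAvg : ∀ (N : ℕ) ω θ, (1 / (N : ℝ)) * ∑ n ∈ Finset.range N, F (X n ω) θ =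
      birkhoffAverage ℝ T (fun ω => F (X 0 ω) θ) N ω := fun N ω θ => by
    simp only [birkhoffAverage, birkhoffSum, smul_eq_mul, one_div, hX _ ω]
  filter_upwards [hErg.ae_tendsto_iSup_abs_birkhoffAverage_sub_integral
    (G := fun ω θ => F (X 0 ω) θ) hΘc
    (fun θ hθ => (hFmeas θ hθ).comp hX0) (fun ω => hFcont (X 0 ω)) henv] with ω hω
  simpa only [hAvg] using hω

/-- Lemma 1 (van der Plas): uniform strong law of large numbers for a stationary
ergodic process and a function continuous in the parameter over a compact set,
dominated by an integrable envelope. -/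
theorem uniform_ergodic_theorem
    {Ω E V : Type*} [MeasurableSpace Ω]
    [NormedAddCommGroup E] [InnerProductSpace ℝ E] [FiniteDimensional ℝ E]
    [MeasurableSpace E] [BorelSpace E]
    [NormedAddCommGroup V] [InnerProductSpace ℝ V] [FiniteDimensional ℝ V]
    (μ : Measure Ω) [IsProbabilityMeasure μ]
    (T : Ω → Ω) (hT : MeasurePreserving T μ μ) (hErg : Ergodic T μ)
    (X : ℕ → Ω → E) (hX0 : Measurable (X 0))
    (hshift : ∀ n ω, X (n+1) ω = X n (T ω))
    (Θ : Set V) (hΘc : IsCompact Θ) (hΘne : Θ.Nonempty)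
    (F : E → V → ℝ)
    (hFmeas : ∀ θ ∈ Θ, Measurable fun x => F x θ)
    (hFcont : ∀ x : E, ContinuousOn (F x) Θ)
    (henv : Integrable (fun ω => ⨆ θ : Θ, |F (X 0 ω) (θ : V)|) μ) :
    ∀ᵐ ω ∂μ, Tendsto
      (fun N : ℕ => ⨆ θ : Θ,
        |(1 / (N : ℝ)) * (∑ n ∈ Finset.range N, F (X n ω) (θ : V))
          - ∫ ω', F (X 0 ω') (θ : V) ∂μ|)
      atTop (nhds 0) :=
  uniform_ergodic_theorem_general μ T hErg X hX0 hshift Θ hΘc F hFmeas hFcont henv
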